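/- arXiv:1706.06361 — 12 statements merged into one kernel-verified Lean document; each statement's English description precedes it below -/
import Mathlib

section
/- For the 2×2 matrix L(x,α,ζ) with rows (ζ, αx) and (α/x, ζ), the matrix equation L(u,α,ζ)·L(v,β,ζ) = L(y,β,ζ)·L(x,α,ζ), required to hold for all ζ, is satisfied by u = y(αx+βy)/(βx+αy) and v = x(αx+βy)/(βx+αy). -/
open Matrix

/-- The Lax matrix `L(x,α,ζ) = [[ζ, αx],[α/x, ζ]]`. -/
noncomputable def Lax (x α ζ : ℝ) : Matrix (Fin 2) (Fin 2) ℝ :=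
  !![ζ, α * x; α / x, ζ]

/-- `u = y(αx+βy)/(βx+αy)`, `v = x(αx+βy)/(βx+αy)` satisfy the Lax equation
`L(u,α,ζ)L(v,β,ζ) = L(y,β,ζ)L(x,α,ζ)` for all ζ. -/
theorem collision_Lax_equation (α β x y : ℝ)
    (hα : 0 < α) (hβ : 0 < β) (hx : 0 < x) (hy : 0 < y) :
    ∀ ζ : ℝ,
      Lax (y * (α * x + β * y) / (β * x + α * y)) α ζ *
        Lax (x * (α * x + β * y) / (β * x + α * y)) β ζ =
      Lax y β ζ * Lax x α ζ := by
  intro ζ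
  have hd : β * x + α * y ≠ 0 := by positivity
  have hs : α * x + β * y ≠ 0 := by positivity
  have hx' : x ≠ 0 := hx.ne'
  have hy' : y ≠ 0 := hy.ne'
  unfold Lax
  ext i j
  fin_cases i <;> fin_cases j <;>
    simp [Matrix.mul_apply, Fin.sum_univ_two] <;>
    field_simp <;> ring
end

section
/- For the 2×2 matrix L(x,α,ζ) = [[ζ, αx],[α/x, ζ]] with x,u,y,v positive reals and α,β positive parameters, if L(u,α,ζ)·L(v,β,ζ) = L(y,β,ζ)·L(x,α,ζ) holds for all ζ, then u = y(αx+βy)/(βx+αy) and v = x(αx+βy)/(βx+αy), i.e. L is a strong Lax matrix of the Yang–Baxter map R_{α,β}. -/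
open Matrix

/-! The `(0,0)` entry of the Lax equation gives `u x = y v` and the `(0,1)` entry gives
`α u + β v = α x + β y`; these two relations determine `(u, v)` linearly:
`u (β x + α y) = y (α x + β y)` and `v (β x + α y) = x (α x + β y)`. -/

theorem Lax_mul_Lax (x y α β ζ : ℝ) :
    Lax x α ζ * Lax y β ζ =
      !![ζ ^ 2 + α * β * (x / y), ζ * (α * x + β * y);
        ζ * (α / x + β / y), ζ ^ 2 + α * β * (y / x)] := by
  ext i j
  fin_cases i <;> fin_cases j <;>
    simp [Lax, Matrix.mul_apply, Fin.sum_univ_two] <;> ring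

section LaxEquation

variable {α β x y u v ζ : ℝ}

theorem mul_eq_mul_of_Lax_mul_Lax_eq (hα : α ≠ 0) (hβ : β ≠ 0) (hx : x ≠ 0) (hv : v ≠ 0)
    (h : Lax u α ζ * Lax v β ζ = Lax y β ζ * Lax x α ζ) : u * x = y * v := by
  have h00 := congrFun (congrFun h 0) 0
  simp only [Lax_mul_Lax, of_apply, cons_val', cons_val_zero, empty_val', cons_val_fin_one,
    add_right_inj] at h00
  field_simp at h00
  linear_combination h00

theorem add_eq_add_of_Lax_mul_Lax_eq (hζ : ζ ≠ 0)
    (h : Lax u α ζ * Lax v β ζ = Lax y β ζ * Lax x α ζ) :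
    α * u + β * v = α * x + β * y := by
  have h01 := congrFun (congrFun h 0) 1
  simp only [Lax_mul_Lax, of_apply, cons_val', cons_val_one, cons_val_zero, empty_val',
    cons_val_fin_one] at h01
  linear_combination mul_left_cancel₀ hζ h01

theorem eq_div_of_mul_eq_mul_of_add_eq_add (hd : β * x + α * y ≠ 0)
    (hmul : u * x = y * v) (hadd : α * u + β * v = α * x + β * y) :
    u = y * (α * x + β * y) / (β * x + α * y) ∧
    v = x * (α * x + β * y) / (β * x + α * y) := by
  constructor <;> rw [eq_div_iff hd]
  · linear_combination β * hmul + y * hadd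
  · linear_combination -α * hmul + x * hadd

end LaxEquation

theorem strong_Lax_general (α β x y u v : ℝ)
    (hα : 0 < α) (hβ : 0 < β) (hx : 0 < x) (hy : 0 < y) (hv : 0 < v)
    (h : ∀ ζ : ℝ, Lax u α ζ * Lax v β ζ = Lax y β ζ * Lax x α ζ) :
    u = y * (α * x + β * y) / (β * x + α * y) ∧
    v = x * (α * x + β * y) / (β * x + α * y) :=
  eq_div_of_mul_eq_mul_of_add_eq_add (by positivity)
    (mul_eq_mul_of_Lax_mul_Lax_eq hα.ne' hβ.ne' hx.ne' hv.ne' (h 1))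
    (add_eq_add_of_Lax_mul_Lax_eq one_ne_zero (h 1))

/-- `L` is a strong Lax matrix: the Lax equation (for all ζ) forces
`u = y(αx+βy)/(βx+αy)` and `v = x(αx+βy)/(βx+αy)`. -/
theorem strong_Lax (α β x y u v : ℝ)
    (hα : 0 < α) (hβ : 0 < β) (hx : 0 < x) (hy : 0 < y) (hu : 0 < u) (hv : 0 < v)
    (h : ∀ ζ : ℝ, Lax u α ζ * Lax v β ζ = Lax y β ζ * Lax x α ζ) :
    u = y * (α * x + β * y) / (β * x + α * y) ∧
    v = x * (α * x + β * y) / (β * x + α * y) :=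
  strong_Lax_general α β x y u v hα hβ hx hy hv h
end

section
/- If L(x,α,ζ) = [[ζ, αx],[α/x, ζ]] and x̂,ŷ,ẑ,x,y,z are positive reals with L(x̂,α,ζ)L(ŷ,β,ζ)L(ẑ,γ,ζ) = L(x,α,ζ)L(y,β,ζ)L(z,γ,ζ) for all ζ, then x̂ = x, ŷ = y, ẑ = z. -/
/-! Three coefficients of the product `L(x,α,ζ) L(y,β,ζ) L(z,γ,ζ)`, read off at `ζ = 0, 1`,
already determine the factors: with `A = αx + βy + γz`, `P = xz/y` and
`C = αβ x/y + αγ x/z + βγ y/z` one has `z (C + γ²) = αβ P + γ A`, then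
`y (α P + β z) = z (A - γ z)`, then `x = P y / z`, and all cancelled factors are positive. -/

open Matrix

theorem Lax_mul_Lax_mul_Lax_zero_one (x y z α β γ ζ : ℝ) :
    (Lax x α ζ * Lax y β ζ * Lax z γ ζ) 0 1 =
      ζ ^ 2 * (α * x + β * y + γ * z) + α * β * γ * (x * z / y) := by
  simp only [Lax, mul_apply, Fin.sum_univ_two, of_apply, cons_val', cons_val_zero,
    cons_val_one, empty_val', cons_val_fin_one]
  ring

theorem Lax_mul_Lax_mul_Lax_zero_zero (x y z α β γ ζ : ℝ) :
    (Lax x α ζ * Lax y β ζ * Lax z γ ζ) 0 0 =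
      ζ ^ 3 + ζ * (α * β * (x / y) + α * γ * (x / z) + β * γ * (y / z)) := by
  simp only [Lax, mul_apply, Fin.sum_univ_two, of_apply, cons_val', cons_val_zero,
    cons_val_one, empty_val', cons_val_fin_one]
  ring

section Reconstruction

variable {K : Type*} [Field K] {α β γ x y z : K}

theorem mul_ratio_sum_add_sq_eq (hy : y ≠ 0) (hz : z ≠ 0) :
    z * (α * β * (x / y) + α * γ * (x / z) + β * γ * (y / z) + γ ^ 2) =
      α * β * (x * z / y) + γ * (α * x + β * y + γ * z) := by
  field_simp
  ring

theorem mul_ratio_add_eq_mul_sub (hy : y ≠ 0) :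
    y * (α * (x * z / y) + β * z) = z * (α * x + β * y + γ * z - γ * z) := by
  field_simp
  ring

end Reconstruction

theorem triple_factorization_unique_general (α β γ x y z x' y' z' : ℝ)
    (hα : 0 < α) (hβ : 0 < β) (hγ : 0 < γ)
    (hx : 0 < x) (hy : 0 < y) (hz : 0 < z)
    (hy' : 0 < y') (hz' : 0 < z')
    (h : ∀ ζ : ℝ,
      Lax x' α ζ * Lax y' β ζ * Lax z' γ ζ = Lax x α ζ * Lax y β ζ * Lax z γ ζ) :
    x' = x ∧ y' = y ∧ z' = z := by
  have hP : x' * z' / y' = x * z / y := by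
    have := congrFun (congrFun (h 0) 0) 1
    simp only [Lax_mul_Lax_mul_Lax_zero_one] at this
    exact mul_left_cancel₀ (a := α * β * γ) (by positivity) (by linear_combination this)
  have hA : α * x' + β * y' + γ * z' = α * x + β * y + γ * z := by
    have := congrFun (congrFun (h 1) 0) 1
    simp only [Lax_mul_Lax_mul_Lax_zero_one, hP] at this
    linear_combination this
  have hC : α * β * (x' / y') + α * γ * (x' / z') + β * γ * (y' / z') =
      α * β * (x / y) + α * γ * (x / z) + β * γ * (y / z) := by
    have := congrFun (congrFun (h 1) 0) 0
    simp only [Lax_mul_Lax_mul_Lax_zero_zero] at this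
    linear_combination this
  have hzz : z' = z := by
    refine mul_right_cancel₀
      (b := α * β * (x / y) + α * γ * (x / z) + β * γ * (y / z) + γ ^ 2) (by positivity) ?_
    rw [← hC, mul_ratio_sum_add_sq_eq hy'.ne' hz'.ne', hC, mul_ratio_sum_add_sq_eq hy.ne' hz.ne', hP, hA]
  subst z'
  have hyy : y' = y := by
    refine mul_right_cancel₀ (b := α * (x * z / y) + β * z) (by positivity) ?_
    rw [← hP, mul_ratio_add_eq_mul_sub (γ := γ) hy'.ne', hA, hP, mul_ratio_add_eq_mul_sub hy.ne']
  subst y'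
  rw [div_left_inj' hy'.ne', mul_left_inj' hz'.ne'] at hP
  exact ⟨hP, rfl, rfl⟩

/-- Uniqueness of the triple factorization: if
`L(x̂,α,ζ)L(ŷ,β,ζ)L(ẑ,γ,ζ) = L(x,α,ζ)L(y,β,ζ)L(z,γ,ζ)` for all ζ,
then `x̂ = x`, `ŷ = y`, `ẑ = z`. -/
theorem triple_factorization_unique (α β γ x y z x' y' z' : ℝ)
    (hα : 0 < α) (hβ : 0 < β) (hγ : 0 < γ)
    (hx : 0 < x) (hy : 0 < y) (hz : 0 < z)
    (hx' : 0 < x') (hy' : 0 < y') (hz' : 0 < z')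
    (h : ∀ ζ : ℝ,
      Lax x' α ζ * Lax y' β ζ * Lax z' γ ζ = Lax x α ζ * Lax y β ζ * Lax z γ ζ) :
    x' = x ∧ y' = y ∧ z' = z :=
  triple_factorization_unique_general α β γ x y z x' y' z' hα hβ hγ hx hy hz hy' hz' h
end

section
/- The map R_{α,β}(x,y) = (u,v) with u = y(αx+βy)/(βx+αy), v = x(αx+βy)/(βx+αy) preserves the 2-form ω = (1/x² − 1/y²) dx ∧ dy, i.e. (1/u² − 1/v²)(∂u/∂x ∂v/∂y − ∂u/∂y ∂v/∂x) = 1/x² − 1/y². -/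
/-- First component of the Yang–Baxter map. -/
noncomputable def ufun (α β x y : ℝ) : ℝ := y * (α * x + β * y) / (β * x + α * y)

/-- Second component of the Yang–Baxter map. -/
noncomputable def vfun (α β x y : ℝ) : ℝ := x * (α * x + β * y) / (β * x + α * y)

/-!
Both components of `R_{α,β}(x, y)` are the swapped coordinates `(y, x)` rescaled by the common
factor `λ = (αx + βy)/(βx + αy)`. Hence the coefficient `1/u² − 1/v²` is `λ⁻² (1/y² − 1/x²)`,
while a direct computation gives the Jacobian determinant `−λ²`: the swap contributes the sign,
and the two powers of `λ` cancel.
-/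

section YangBaxterMap

variable (α β : ℝ) {x y : ℝ}

theorem vfun_eq_ufun : vfun α β x y = ufun β α y x := by
  simp only [ufun, vfun]
  ring

theorem one_div_ufun_sq_sub_one_div_vfun_sq :
    1 / ufun α β x y ^ 2 - 1 / vfun α β x y ^ 2 =
      ((β * x + α * y) / (α * x + β * y)) ^ 2 * (1 / y ^ 2 - 1 / x ^ 2) := by
  simp only [ufun, vfun]
  generalize α * x + β * y = N
  generalize β * x + α * y = D
  simp only [one_div, div_pow, mul_pow, inv_div]
  ring

theorem hasDerivAt_ufun_left (hD : β * x + α * y ≠ 0) :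
    HasDerivAt (fun t => ufun α β t y) ((α ^ 2 - β ^ 2) * y ^ 2 / (β * x + α * y) ^ 2) x := by
  have hnum : HasDerivAt (fun t => y * (α * t + β * y)) (y * α) x := by
    simpa using (((hasDerivAt_id x).const_mul α).add_const (β * y)).const_mul y
  have hden : HasDerivAt (fun t => β * t + α * y) β x := by
    simpa using ((hasDerivAt_id x).const_mul β).add_const (α * y)
  exact (hnum.div hden hD).congr_deriv (by ring)

theorem hasDerivAt_ufun_right (hD : β * x + α * y ≠ 0) :
    HasDerivAt (fun t => ufun α β x t)
      (β * (α * x ^ 2 + 2 * β * x * y + α * y ^ 2) / (β * x + α * y) ^ 2) y := by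
  have hnum : HasDerivAt (fun t => t * (α * x + β * t)) (α * x + 2 * β * y) y :=
    ((hasDerivAt_id' y).mul (((hasDerivAt_id' y).const_mul β).const_add (α * x))).congr_deriv
      (by ring)
  have hden : HasDerivAt (fun t => β * x + α * t) α y := by
    simpa using ((hasDerivAt_id y).const_mul α).const_add (β * x)
  exact (hnum.div hden hD).congr_deriv (by ring)

theorem jacobian_ufun_vfun (hD : β * x + α * y ≠ 0) :
    deriv (fun t => ufun α β t y) x * deriv (fun t => vfun α β x t) y -
      deriv (fun t => ufun α β x t) y * deriv (fun t => vfun α β t y) x =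
      -((α * x + β * y) / (β * x + α * y)) ^ 2 := by
  have hD' : α * y + β * x ≠ 0 := by rwa [add_comm]
  simp only [vfun_eq_ufun]
  rw [(hasDerivAt_ufun_left α β hD).deriv, (hasDerivAt_ufun_right α β hD).deriv,
    (hasDerivAt_ufun_left β α hD').deriv, (hasDerivAt_ufun_right β α hD').deriv]
  field_simp
  ring

end YangBaxterMap

/-- The map `R_{α,β}` preserves the symplectic form `ω = (1/x² − 1/y²) dx ∧ dy`:
the Jacobian identity `(1/u² − 1/v²)·(∂u/∂x ∂v/∂y − ∂u/∂y ∂v/∂x) = 1/x² − 1/y²`. -/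
theorem collision_symplectic (α β x y : ℝ)
    (hα : 0 < α) (hβ : 0 < β) (hx : 0 < x) (hy : 0 < y) :
    (1 / (ufun α β x y) ^ 2 - 1 / (vfun α β x y) ^ 2) *
      (deriv (fun t => ufun α β t y) x * deriv (fun t => vfun α β x t) y -
       deriv (fun t => ufun α β x t) y * deriv (fun t => vfun α β t y) x) =
    1 / x ^ 2 - 1 / y ^ 2 := by
  have hD : β * x + α * y ≠ 0 := by positivity
  have hN : α * x + β * y ≠ 0 := by positivity
  rw [one_div_ufun_sq_sub_one_div_vfun_sq, jacobian_ufun_vfun α β hD]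
  field_simp
  ring
end

section
/- The pair u = y(αx+βy)/(βx+αy), v = x(αx+βy)/(βx+αy) satisfies the conservation laws α(x + 1/x) + β(y + 1/y) = α(u + 1/u) + β(v + 1/v) and α(x − 1/x) + β(y − 1/y) = α(u − 1/u) + β(v − 1/v). -/
/-- The collision Yang–Baxter map conserves the (transformed) relativistic
energy and momentum. -/
theorem collision_conservation (α β x y : ℝ)
    (hα : 0 < α) (hβ : 0 < β) (hx : 0 < x) (hy : 0 < y) :
    α * (x + 1 / x) + β * (y + 1 / y) =
      α * (ufun α β x y + 1 / ufun α β x y) + β * (vfun α β x y + 1 / vfun α β x y) ∧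
    α * (x - 1 / x) + β * (y - 1 / y) =
      α * (ufun α β x y - 1 / ufun α β x y) + β * (vfun α β x y - 1 / vfun α β x y) := by
  have h1 : (0:ℝ) < α * x + β * y := by positivity
  have h2 : (0:ℝ) < β * x + α * y := by positivity
  have h1' := h1.ne'
  have h2' := h2.ne'
  unfold ufun vfun
  constructor <;> (field_simp; ring)
end

section
/- Given positive reals x,y and positive parameters m₁,m₂, the only solutions (u,v) in positive reals of the system m₁(x²+1)/x + m₂(y²+1)/y = m₁(u²+1)/u + m₂(v²+1)/v and m₁(x²−1)/x + m₂(y²−1)/y = m₁(u²−1)/u + m₂(v²−1)/v are the trivial solution (u,v) = (x,y) and the collision solution u = y(m₁x+m₂y)/(m₂x+m₁y), v = x(m₁x+m₂y)/(m₂x+m₁y). -/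
/-- The only positive solutions of the transformed relativistic energy–momentum
conservation system are the trivial one and the collision map. -/
theorem collision_solutions (m₁ m₂ x y u v : ℝ)
    (hm₁ : 0 < m₁) (hm₂ : 0 < m₂) (hx : 0 < x) (hy : 0 < y) (hu : 0 < u) (hv : 0 < v) :
    (m₁ * (x ^ 2 + 1) / x + m₂ * (y ^ 2 + 1) / y =
        m₁ * (u ^ 2 + 1) / u + m₂ * (v ^ 2 + 1) / v ∧
     m₁ * (x ^ 2 - 1) / x + m₂ * (y ^ 2 - 1) / y =
        m₁ * (u ^ 2 - 1) / u + m₂ * (v ^ 2 - 1) / v) ↔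
    ((u, v) = (x, y) ∨
     (u = y * (m₁ * x + m₂ * y) / (m₂ * x + m₁ * y) ∧
      v = x * (m₁ * x + m₂ * y) / (m₂ * x + m₁ * y))) := by
  have hx' := hx.ne'
  have hy' := hy.ne'
  have hu' := hu.ne'
  have hv' := hv.ne'
  have hd : 0 < m₂ * x + m₁ * y := by positivity
  constructor
  · rintro ⟨h1, h2⟩
    have e1 : (m₁ * (x ^ 2 + 1)) * (y * u * v) + (m₂ * (y ^ 2 + 1)) * (x * u * v) =
        (m₁ * (u ^ 2 + 1)) * (x * y * v) + (m₂ * (v ^ 2 + 1)) * (x * y * u) := by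
      field_simp at h1; linarith
    have e2 : (m₁ * (x ^ 2 - 1)) * (y * u * v) + (m₂ * (y ^ 2 - 1)) * (x * u * v) =
        (m₁ * (u ^ 2 - 1)) * (x * y * v) + (m₂ * (v ^ 2 - 1)) * (x * y * u) := by
      field_simp at h2; linarith
    have hS : m₁ * x + m₂ * y = m₁ * u + m₂ * v := by
      have hxyuv : 0 < x * y * u * v := by positivity
      have hc : (m₁ * x + m₂ * y) * (x * y * u * v) = (m₁ * u + m₂ * v) * (x * y * u * v) := by
        linear_combination (e1 + e2) / 2
      exact mul_right_cancel₀ hxyuv.ne' hc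
    have hP : m₁ * u * y * v + m₂ * x * u * v = m₁ * x * y * v + m₂ * x * u * y := by
      linear_combination (e1 - e2) / 2
    have key : m₁ * (u - x) * (y * v - x * u) = 0 := by
      linear_combination hP + (x * u) * hS
    rcases mul_eq_zero.1 key with h | h
    · have hux : u = x := by
        rcases mul_eq_zero.1 h with h' | h'
        · exact absurd h' hm₁.ne'
        · linarith
      have hvy : v = y := by
        have : m₂ * v = m₂ * y := by rw [hux] at hS; linarith
        exact mul_left_cancel₀ hm₂.ne' this
      left; simp [hux, hvy]
    · right
      have hyv : y * v = x * u := by linarith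
      have hueq : u * (m₂ * x + m₁ * y) = y * (m₁ * x + m₂ * y) := by
        linear_combination (-y) * hS - m₂ * hyv
      constructor
      · rw [eq_div_iff hd.ne']
        linear_combination hueq
      · rw [eq_div_iff hd.ne']
        have hc : y * (v * (m₂ * x + m₁ * y)) = y * (x * (m₁ * x + m₂ * y)) := by
          linear_combination (m₂ * x + m₁ * y) * hyv + x * hueq
        exact mul_left_cancel₀ hy' hc
  · rintro (h | ⟨h1, h2⟩)
    · obtain ⟨rfl, rfl⟩ := Prod.ext_iff.1 h
      exact ⟨rfl, rfl⟩
    · subst h1 h2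
      constructor <;> (rw [div_add_div _ _ hx' hy', div_add_div _ _ hu' hv']; field_simp; ring)
end

section
/- The relativistic collision map 𝓡_{m₁,m₂} = (φ⁻¹ × φ⁻¹) ∘ R_{m₁,m₂} ∘ (φ × φ), where φ(v) = √((c+v)/(c−v)) and R_{m₁,m₂} is the Yang–Baxter map on positive reals, satisfies the parametric Yang–Baxter equation on (−c,c) × (−c,c). -/
/-- `φ(v) = √((c+v)/(c−v))`. -/
noncomputable def phi (c v : ℝ) : ℝ := Real.sqrt ((c + v) / (c - v))

/-- The inverse of `φ`: `φ⁻¹(x) = c(x²−1)/(x²+1)`. -/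
noncomputable def phiInv (c x : ℝ) : ℝ := c * (x ^ 2 - 1) / (x ^ 2 + 1)

/-- The Yang–Baxter map on positive reals. -/
noncomputable def Rmap (α β : ℝ) : ℝ × ℝ → ℝ × ℝ :=
  fun p => (p.2 * (α * p.1 + β * p.2) / (β * p.1 + α * p.2),
            p.1 * (α * p.1 + β * p.2) / (β * p.1 + α * p.2))

/-- The relativistic collision map `𝓡_{m₁,m₂} = (φ⁻¹ × φ⁻¹) ∘ R_{m₁,m₂} ∘ (φ × φ)`. -/
noncomputable def Rcol (c m₁ m₂ : ℝ) : ℝ × ℝ → ℝ × ℝ :=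
  fun p => ((phiInv c (Rmap m₁ m₂ (phi c p.1, phi c p.2)).1),
            (phiInv c (Rmap m₁ m₂ (phi c p.1, phi c p.2)).2))

/-- Action on the first and second factor. -/
noncomputable def Rcol12 (c m₁ m₂ : ℝ) : ℝ × ℝ × ℝ → ℝ × ℝ × ℝ :=
  fun p => ((Rcol c m₁ m₂ (p.1, p.2.1)).1, (Rcol c m₁ m₂ (p.1, p.2.1)).2, p.2.2)

/-- Action on the first and third factor. -/
noncomputable def Rcol13 (c m₁ m₂ : ℝ) : ℝ × ℝ × ℝ → ℝ × ℝ × ℝ :=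
  fun p => ((Rcol c m₁ m₂ (p.1, p.2.2)).1, p.2.1, (Rcol c m₁ m₂ (p.1, p.2.2)).2)

/-- Action on the second and third factor. -/
noncomputable def Rcol23 (c m₁ m₂ : ℝ) : ℝ × ℝ × ℝ → ℝ × ℝ × ℝ :=
  fun p => (p.1, (Rcol c m₁ m₂ (p.2.1, p.2.2)).1, (Rcol c m₁ m₂ (p.2.1, p.2.2)).2)


lemma phi_phiInv {c x : ℝ} (hc : 0 < c) (hx : 0 < x) : phi c (phiInv c x) = x := by
  have h1 : x ^ 2 + 1 ≠ 0 := by positivity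
  have hnum : c + c * (x ^ 2 - 1) / (x ^ 2 + 1) = 2 * c * x ^ 2 / (x ^ 2 + 1) := by
    field_simp; ring
  have hden : c - c * (x ^ 2 - 1) / (x ^ 2 + 1) = 2 * c / (x ^ 2 + 1) := by
    field_simp; ring
  have harg : (2 * c * x ^ 2 / (x ^ 2 + 1)) / (2 * c / (x ^ 2 + 1)) = x ^ 2 := by
    field_simp
  rw [phi, phiInv, hnum, hden, harg, Real.sqrt_sq hx.le]

lemma phi_pos {c v : ℝ} (hv : v ∈ Set.Ioo (-c) c) : 0 < phi c v := by
  obtain ⟨h1, h2⟩ := hv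
  have : 0 < (c + v) / (c - v) := div_pos (by linarith) (by linarith)
  exact Real.sqrt_pos.mpr this

lemma phiInv_phi {c v : ℝ} (hv : v ∈ Set.Ioo (-c) c) : phiInv c (phi c v) = v := by
  obtain ⟨h1, h2⟩ := hv
  have hcv : 0 < c - v := by linarith
  have hcv' : 0 < c + v := by linarith
  have hc : (0:ℝ) < c := by linarith
  have hsq : phi c v ^ 2 = (c + v) / (c - v) :=
    Real.sq_sqrt (le_of_lt (div_pos hcv' hcv))
  rw [phiInv, hsq]
  field_simp
  ring

lemma rmap_pos1 {α β x y : ℝ} (hα : 0 < α) (hβ : 0 < β) (hx : 0 < x) (hy : 0 < y) :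
    0 < (Rmap α β (x, y)).1 := by
  simp only [Rmap]
  positivity

lemma rmap_pos2 {α β x y : ℝ} (hα : 0 < α) (hβ : 0 < β) (hx : 0 < x) (hy : 0 < y) :
    0 < (Rmap α β (x, y)).2 := by
  simp only [Rmap]
  positivity

lemma rcol_apply {c x₁ x₂ : ℝ} (hc : 0 < c) (h1 : 0 < x₁) (h2 : 0 < x₂) (m₁ m₂ : ℝ) :
    Rcol c m₁ m₂ (phiInv c x₁, phiInv c x₂)
      = (phiInv c (Rmap m₁ m₂ (x₁, x₂)).1, phiInv c (Rmap m₁ m₂ (x₁, x₂)).2) := by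
  simp only [Rcol]
  rw [phi_phiInv hc h1, phi_phiInv hc h2]

lemma rmap_apply (α β a b : ℝ) :
    Rmap α β (a, b) = (b * (α * a + β * b) / (β * a + α * b),
                       a * (α * a + β * b) / (β * a + α * b)) := rfl

lemma rmap_div (α β a b d : ℝ) (hd : d ≠ 0) :
    Rmap α β (a / d, b / d) = ((Rmap α β (a, b)).1 / d, (Rmap α β (a, b)).2 / d) := by
  rcases eq_or_ne (β * a + α * b) 0 with he | he
  · have hden : β * (a / d) + α * (b / d) = 0 := by
      have h : β * (a / d) + α * (b / d) = (β * a + α * b) / d := by ring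
      rw [h, he, zero_div]
    simp [rmap_apply, hden, he]
  · simp only [rmap_apply, Prod.mk.injEq]
    constructor <;> (field_simp)

set_option maxHeartbeats 4000000 in
lemma rmap_yb {m₁ m₂ m₃ x y z : ℝ}
    (hm₁ : 0 < m₁) (hm₂ : 0 < m₂) (hm₃ : 0 < m₃)
    (hx : 0 < x) (hy : 0 < y) (hz : 0 < z) :
    ((Rmap m₁ m₃ ((Rmap m₁ m₂ (x, y)).1, z)).1,
     (Rmap m₂ m₃ ((Rmap m₁ m₂ (x, y)).2, (Rmap m₁ m₃ ((Rmap m₁ m₂ (x, y)).1, z)).2)).1,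
     (Rmap m₂ m₃ ((Rmap m₁ m₂ (x, y)).2, (Rmap m₁ m₃ ((Rmap m₁ m₂ (x, y)).1, z)).2)).2)
    =
    ((Rmap m₁ m₂ ((Rmap m₁ m₃ (x, (Rmap m₂ m₃ (y, z)).2)).1, (Rmap m₂ m₃ (y, z)).1)).1,
     (Rmap m₁ m₂ ((Rmap m₁ m₃ (x, (Rmap m₂ m₃ (y, z)).2)).1, (Rmap m₂ m₃ (y, z)).1)).2,
     (Rmap m₁ m₃ (x, (Rmap m₂ m₃ (y, z)).2)).2) := by
  have hD : (0:ℝ) < (m₂ * x + m₁ * y) := by positivity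
  have hE : (0:ℝ) < (m₃ * (y * (m₁ * x + m₂ * y)) + m₁ * (z * (m₂ * x + m₁ * y))) := by positivity
  have hG : (0:ℝ) < (m₃ * ((x * (m₁ * x + m₂ * y)) * (m₃ * (y * (m₁ * x + m₂ * y)) + m₁ * (z * (m₂ * x + m₁ * y)))) + m₂ * ((y * (m₁ * x + m₂ * y)) * (m₁ * (y * (m₁ * x + m₂ * y)) + m₃ * (z * (m₂ * x + m₁ * y))))) := by positivity
  have hDp : (0:ℝ) < (m₃ * y + m₂ * z) := by positivity
  have hEp : (0:ℝ) < (m₃ * (x * (m₃ * y + m₂ * z)) + m₁ * (y * (m₂ * y + m₃ * z))) := by positivity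
  have hGp : (0:ℝ) < (m₂ * ((y * (m₂ * y + m₃ * z)) * (m₁ * (x * (m₃ * y + m₂ * z)) + m₃ * (y * (m₂ * y + m₃ * z)))) + m₁ * ((z * (m₂ * y + m₃ * z)) * (m₃ * (x * (m₃ * y + m₂ * z)) + m₁ * (y * (m₂ * y + m₃ * z))))) := by positivity
  have s2 : Rmap m₁ m₃ ((y * (m₁ * x + m₂ * y)) / (m₂ * x + m₁ * y), z)
      = (((z * (m₂ * x + m₁ * y)) * (m₁ * (y * (m₁ * x + m₂ * y)) + m₃ * (z * (m₂ * x + m₁ * y)))) / (m₃ * (y * (m₁ * x + m₂ * y)) + m₁ * (z * (m₂ * x + m₁ * y))) / (m₂ * x + m₁ * y), ((y * (m₁ * x + m₂ * y)) * (m₁ * (y * (m₁ * x + m₂ * y)) + m₃ * (z * (m₂ * x + m₁ * y)))) / (m₃ * (y * (m₁ * x + m₂ * y)) + m₁ * (z * (m₂ * x + m₁ * y))) / (m₂ * x + m₁ * y)) := by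
    rw [show (((y * (m₁ * x + m₂ * y)) / (m₂ * x + m₁ * y) : ℝ), z) = ((y * (m₁ * x + m₂ * y)) / (m₂ * x + m₁ * y), (z * (m₂ * x + m₁ * y)) / (m₂ * x + m₁ * y)) by
          rw [mul_div_cancel_right₀ _ hD.ne'],
        rmap_div _ _ _ _ _ hD.ne', rmap_apply]
  have s3 : Rmap m₂ m₃ ((x * (m₁ * x + m₂ * y)) / (m₂ * x + m₁ * y), ((y * (m₁ * x + m₂ * y)) * (m₁ * (y * (m₁ * x + m₂ * y)) + m₃ * (z * (m₂ * x + m₁ * y)))) / (m₃ * (y * (m₁ * x + m₂ * y)) + m₁ * (z * (m₂ * x + m₁ * y))) / (m₂ * x + m₁ * y))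
      = ((((y * (m₁ * x + m₂ * y)) * (m₁ * (y * (m₁ * x + m₂ * y)) + m₃ * (z * (m₂ * x + m₁ * y)))) * (m₂ * ((x * (m₁ * x + m₂ * y)) * (m₃ * (y * (m₁ * x + m₂ * y)) + m₁ * (z * (m₂ * x + m₁ * y)))) + m₃ * ((y * (m₁ * x + m₂ * y)) * (m₁ * (y * (m₁ * x + m₂ * y)) + m₃ * (z * (m₂ * x + m₁ * y)))))) / (m₃ * ((x * (m₁ * x + m₂ * y)) * (m₃ * (y * (m₁ * x + m₂ * y)) + m₁ * (z * (m₂ * x + m₁ * y)))) + m₂ * ((y * (m₁ * x + m₂ * y)) * (m₁ * (y * (m₁ * x + m₂ * y)) + m₃ * (z * (m₂ * x + m₁ * y))))) / (m₃ * (y * (m₁ * x + m₂ * y)) + m₁ * (z * (m₂ * x + m₁ * y))) / (m₂ * x + m₁ * y), ((x * (m₁ * x + m₂ * y)) * (m₃ * (y * (m₁ * x + m₂ * y)) + m₁ * (z * (m₂ * x + m₁ * y))) * (m₂ * ((x * (m₁ * x + m₂ * y)) * (m₃ * (y * (m₁ * x + m₂ * y)) + m₁ * (z * (m₂ * x + m₁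 * y)))) + m₃ * ((y * (m₁ * x + m₂ * y)) * (m₁ * (y * (m₁ * x + m₂ * y)) + m₃ * (z * (m₂ * x + m₁ * y)))))) / (m₃ * ((x * (m₁ * x + m₂ * y)) * (m₃ * (y * (m₁ * x + m₂ * y)) + m₁ * (z * (m₂ * x + m₁ * y)))) + m₂ * ((y * (m₁ * x + m₂ * y)) * (m₁ * (y * (m₁ * x + m₂ * y)) + m₃ * (z * (m₂ * x + m₁ * y))))) / (m₃ * (y * (m₁ * x + m₂ * y)) + m₁ * (z * (m₂ * x + m₁ * y))) / (m₂ * x + m₁ * y)) := by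
    rw [rmap_div _ _ _ _ _ hD.ne',
        show (((x * (m₁ * x + m₂ * y)) : ℝ), ((y * (m₁ * x + m₂ * y)) * (m₁ * (y * (m₁ * x + m₂ * y)) + m₃ * (z * (m₂ * x + m₁ * y)))) / (m₃ * (y * (m₁ * x + m₂ * y)) + m₁ * (z * (m₂ * x + m₁ * y)))) = ((x * (m₁ * x + m₂ * y)) * (m₃ * (y * (m₁ * x + m₂ * y)) + m₁ * (z * (m₂ * x + m₁ * y))) / (m₃ * (y * (m₁ * x + m₂ * y)) + m₁ * (z * (m₂ * x + m₁ * y))), ((y * (m₁ * x + m₂ * y)) * (m₁ * (y * (m₁ * x + m₂ * y)) + m₃ * (z * (m₂ * x + m₁ * y)))) / (m₃ * (y * (m₁ * x + m₂ * y)) + m₁ * (z * (m₂ * x + m₁ * y)))) by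
          rw [mul_div_cancel_right₀ _ hE.ne'],
        rmap_div _ _ _ _ _ hE.ne', rmap_apply]
  have t2 : Rmap m₁ m₃ (x, (y * (m₂ * y + m₃ * z)) / (m₃ * y + m₂ * z))
      = (((y * (m₂ * y + m₃ * z)) * (m₁ * (x * (m₃ * y + m₂ * z)) + m₃ * (y * (m₂ * y + m₃ * z)))) / (m₃ * (x * (m₃ * y + m₂ * z)) + m₁ * (y * (m₂ * y + m₃ * z))) / (m₃ * y + m₂ * z), ((x * (m₃ * y + m₂ * z)) * (m₁ * (x * (m₃ * y + m₂ * z)) + m₃ * (y * (m₂ * y + m₃ * z)))) / (m₃ * (x * (m₃ * y + m₂ * z)) + m₁ * (y * (m₂ * y + m₃ * z))) / (m₃ * y + m₂ * z)) := by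
    rw [show ((x : ℝ), (y * (m₂ * y + m₃ * z)) / (m₃ * y + m₂ * z)) = ((x * (m₃ * y + m₂ * z)) / (m₃ * y + m₂ * z), (y * (m₂ * y + m₃ * z)) / (m₃ * y + m₂ * z)) by
          rw [mul_div_cancel_right₀ _ hDp.ne'],
        rmap_div _ _ _ _ _ hDp.ne', rmap_apply]
  have t3 : Rmap m₁ m₂ (((y * (m₂ * y + m₃ * z)) * (m₁ * (x * (m₃ * y + m₂ * z)) + m₃ * (y * (m₂ * y + m₃ * z)))) / (m₃ * (x * (m₃ * y + m₂ * z)) + m₁ * (y * (m₂ * y + m₃ * z))) / (m₃ * y + m₂ * z), (z * (m₂ * y + m₃ * z)) / (m₃ * y + m₂ * z))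
      = (((z * (m₂ * y + m₃ * z)) * (m₃ * (x * (m₃ * y + m₂ * z)) + m₁ * (y * (m₂ * y + m₃ * z))) * (m₁ * ((y * (m₂ * y + m₃ * z)) * (m₁ * (x * (m₃ * y + m₂ * z)) + m₃ * (y * (m₂ * y + m₃ * z)))) + m₂ * ((z * (m₂ * y + m₃ * z)) * (m₃ * (x * (m₃ * y + m₂ * z)) + m₁ * (y * (m₂ * y + m₃ * z)))))) / (m₂ * ((y * (m₂ * y + m₃ * z)) * (m₁ * (x * (m₃ * y + m₂ * z)) + m₃ * (y * (m₂ * y + m₃ * z)))) + m₁ * ((z * (m₂ * y + m₃ * z)) * (m₃ * (x * (m₃ * y + m₂ * z)) + m₁ * (y * (m₂ * y + m₃ * z))))) / (m₃ * (x * (m₃ * y + m₂ * z)) + m₁ * (y * (m₂ * y + m₃ * z))) / (m₃ * y + m₂ * z), (((y * (m₂ * y + m₃ * z)) * (m₁ * (x * (m₃ * y + m₂ * z)) + m₃ * (y * (m₂ * y + m₃ * z)))) * (m₁ * ((y * (m₂ * y + m₃ * z)) * (m₁ * (x * (m₃ * y + m₂ * z)) + m₃ * (y * (m₂ * y + m₃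 * z)))) + m₂ * ((z * (m₂ * y + m₃ * z)) * (m₃ * (x * (m₃ * y + m₂ * z)) + m₁ * (y * (m₂ * y + m₃ * z)))))) / (m₂ * ((y * (m₂ * y + m₃ * z)) * (m₁ * (x * (m₃ * y + m₂ * z)) + m₃ * (y * (m₂ * y + m₃ * z)))) + m₁ * ((z * (m₂ * y + m₃ * z)) * (m₃ * (x * (m₃ * y + m₂ * z)) + m₁ * (y * (m₂ * y + m₃ * z))))) / (m₃ * (x * (m₃ * y + m₂ * z)) + m₁ * (y * (m₂ * y + m₃ * z))) / (m₃ * y + m₂ * z)) := by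
    rw [show ((((y * (m₂ * y + m₃ * z)) * (m₁ * (x * (m₃ * y + m₂ * z)) + m₃ * (y * (m₂ * y + m₃ * z)))) / (m₃ * (x * (m₃ * y + m₂ * z)) + m₁ * (y * (m₂ * y + m₃ * z))) / (m₃ * y + m₂ * z) : ℝ), (z * (m₂ * y + m₃ * z)) / (m₃ * y + m₂ * z))
          = (((y * (m₂ * y + m₃ * z)) * (m₁ * (x * (m₃ * y + m₂ * z)) + m₃ * (y * (m₂ * y + m₃ * z)))) / (m₃ * (x * (m₃ * y + m₂ * z)) + m₁ * (y * (m₂ * y + m₃ * z))) / (m₃ * y + m₂ * z), (z * (m₂ * y + m₃ * z)) * (m₃ * (x * (m₃ * y + m₂ * z)) + m₁ * (y * (m₂ * y + m₃ * z))) / (m₃ * (x * (m₃ * y + m₂ * z)) + m₁ * (y * (m₂ * y + m₃ * z))) / (m₃ * y + m₂ * z)) by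
          rw [mul_div_cancel_right₀ _ hEp.ne'],
        rmap_div _ _ _ _ _ hDp.ne', rmap_div _ _ _ _ _ hEp.ne', rmap_apply]
  have L : ((Rmap m₁ m₃ ((Rmap m₁ m₂ (x, y)).1, z)).1,
     (Rmap m₂ m₃ ((Rmap m₁ m₂ (x, y)).2, (Rmap m₁ m₃ ((Rmap m₁ m₂ (x, y)).1, z)).2)).1,
     (Rmap m₂ m₃ ((Rmap m₁ m₂ (x, y)).2, (Rmap m₁ m₃ ((Rmap m₁ m₂ (x, y)).1, z)).2)).2)
      = ((((z * (m₂ * x + m₁ * y)) * (m₁ * (y * (m₁ * x + m₂ * y)) + m₃ * (z * (m₂ * x + m₁ * y)))) / (m₃ * (y * (m₁ * x + m₂ * y)) + m₁ * (z * (m₂ * x + m₁ * y))) / (m₂ * x + m₁ * y) : ℝ), ((((y * (m₁ * x + m₂ * y)) * (m₁ * (y * (m₁ * x + m₂ * y)) + m₃ * (z * (m₂ * x + m₁ * y)))) * (m₂ * ((x * (m₁ * x + m₂ * y)) * (m₃ * (y * (m₁ * x + m₂ * y)) + m₁ * (z * (m₂ * x + m₁ * y)))) + m₃ * ((y * (m₁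 * x + m₂ * y)) * (m₁ * (y * (m₁ * x + m₂ * y)) + m₃ * (z * (m₂ * x + m₁ * y)))))) / (m₃ * ((x * (m₁ * x + m₂ * y)) * (m₃ * (y * (m₁ * x + m₂ * y)) + m₁ * (z * (m₂ * x + m₁ * y)))) + m₂ * ((y * (m₁ * x + m₂ * y)) * (m₁ * (y * (m₁ * x + m₂ * y)) + m₃ * (z * (m₂ * x + m₁ * y))))) / (m₃ * (y * (m₁ * x + m₂ * y)) + m₁ * (z * (m₂ * x + m₁ * y))) / (m₂ * x + m₁ * y) : ℝ), (((x * (m₁ * x + m₂ * y)) * (m₃ * (y * (m₁ * x + m₂ * y)) + m₁ * (z * (m₂ * x + m₁ * y))) * (m₂ * ((x * (m₁ * x + m₂ * y)) * (m₃ * (y * (m₁ * x + m₂ * y)) + m₁ * (z * (m₂ * x + m₁ * y)))) + m₃ * ((y * (m₁ * x + m₂ * y)) * (m₁ * (y * (m₁ * x + m₂ * y)) + m₃ * (z * (m₂ * x + m₁ * y)))))) / (m₃ * ((x * (m₁ * x + m₂ * y)) * (m₃ * (y * (m₁ * x + m₂ * y)) + m₁ * (z * (m₂ * x + m₁ * y))))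 + m₂ * ((y * (m₁ * x + m₂ * y)) * (m₁ * (y * (m₁ * x + m₂ * y)) + m₃ * (z * (m₂ * x + m₁ * y))))) / (m₃ * (y * (m₁ * x + m₂ * y)) + m₁ * (z * (m₂ * x + m₁ * y))) / (m₂ * x + m₁ * y) : ℝ)) := by
    show ((Rmap m₁ m₃ ((y * (m₁ * x + m₂ * y)) / (m₂ * x + m₁ * y), z)).1,
      (Rmap m₂ m₃ ((x * (m₁ * x + m₂ * y)) / (m₂ * x + m₁ * y), (Rmap m₁ m₃ ((y * (m₁ * x + m₂ * y)) / (m₂ * x + m₁ * y), z)).2)).1,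
      (Rmap m₂ m₃ ((x * (m₁ * x + m₂ * y)) / (m₂ * x + m₁ * y), (Rmap m₁ m₃ ((y * (m₁ * x + m₂ * y)) / (m₂ * x + m₁ * y), z)).2)).2) = _
    rw [s2]
    show (((((z * (m₂ * x + m₁ * y)) * (m₁ * (y * (m₁ * x + m₂ * y)) + m₃ * (z * (m₂ * x + m₁ * y)))) / (m₃ * (y * (m₁ * x + m₂ * y)) + m₁ * (z * (m₂ * x + m₁ * y))) / (m₂ * x + m₁ * y) : ℝ)),
      (Rmap m₂ m₃ ((x * (m₁ * x + m₂ * y)) / (m₂ * x + m₁ * y), ((y * (m₁ * x + m₂ * y)) * (m₁ * (y * (m₁ * x + m₂ * y)) + m₃ * (z * (m₂ * x + m₁ * y)))) / (m₃ * (y * (m₁ * x + m₂ * y)) + m₁ * (z * (m₂ * x + m₁ * y))) / (m₂ * x + m₁ * y))).1,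
      (Rmap m₂ m₃ ((x * (m₁ * x + m₂ * y)) / (m₂ * x + m₁ * y), ((y * (m₁ * x + m₂ * y)) * (m₁ * (y * (m₁ * x + m₂ * y)) + m₃ * (z * (m₂ * x + m₁ * y)))) / (m₃ * (y * (m₁ * x + m₂ * y)) + m₁ * (z * (m₂ * x + m₁ * y))) / (m₂ * x + m₁ * y))).2) = _
    rw [s3]
  have R : ((Rmap m₁ m₂ ((Rmap m₁ m₃ (x, (Rmap m₂ m₃ (y, z)).2)).1, (Rmap m₂ m₃ (y, z)).1)).1,
     (Rmap m₁ m₂ ((Rmap m₁ m₃ (x, (Rmap m₂ m₃ (y, z)).2)).1, (Rmap m₂ m₃ (y, z)).1)).2,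
     (Rmap m₁ m₃ (x, (Rmap m₂ m₃ (y, z)).2)).2)
      = ((((z * (m₂ * y + m₃ * z)) * (m₃ * (x * (m₃ * y + m₂ * z)) + m₁ * (y * (m₂ * y + m₃ * z))) * (m₁ * ((y * (m₂ * y + m₃ * z)) * (m₁ * (x * (m₃ * y + m₂ * z)) + m₃ * (y * (m₂ * y + m₃ * z)))) + m₂ * ((z * (m₂ * y + m₃ * z)) * (m₃ * (x * (m₃ * y + m₂ * z)) + m₁ * (y * (m₂ * y + m₃ * z)))))) / (m₂ * ((y * (m₂ * y + m₃ * z)) * (m₁ * (x * (m₃ * y + m₂ * z)) + m₃ * (y * (m₂ * y + m₃ * z)))) + m₁ * ((z * (m₂ * y + m₃ * z)) * (m₃ * (x * (m₃ * y + m₂ * z)) + m₁ * (y * (m₂ * y + m₃ * z))))) / (m₃ * (x * (m₃ * y + m₂ * z)) + m₁ * (y * (m₂ * y + m₃ * z))) / (m₃ * y + m₂ * z) : ℝ), ((((y * (m₂ * y + m₃ * z)) * (m₁ * (x * (m₃ * y + m₂ * z)) + m₃ * (y * (m₂ * y + m₃ * z)))) * (m₁ * ((y * (m₂ * y + m₃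 * z)) * (m₁ * (x * (m₃ * y + m₂ * z)) + m₃ * (y * (m₂ * y + m₃ * z)))) + m₂ * ((z * (m₂ * y + m₃ * z)) * (m₃ * (x * (m₃ * y + m₂ * z)) + m₁ * (y * (m₂ * y + m₃ * z)))))) / (m₂ * ((y * (m₂ * y + m₃ * z)) * (m₁ * (x * (m₃ * y + m₂ * z)) + m₃ * (y * (m₂ * y + m₃ * z)))) + m₁ * ((z * (m₂ * y + m₃ * z)) * (m₃ * (x * (m₃ * y + m₂ * z)) + m₁ * (y * (m₂ * y + m₃ * z))))) / (m₃ * (x * (m₃ * y + m₂ * z)) + m₁ * (y * (m₂ * y + m₃ * z))) / (m₃ * y + m₂ * z) : ℝ), (((x * (m₃ * y + m₂ * z)) * (m₁ * (x * (m₃ * y + m₂ * z)) + m₃ * (y * (m₂ * y + m₃ * z)))) / (m₃ * (x * (m₃ * y + m₂ * z)) + m₁ * (y * (m₂ * y + m₃ * z))) / (m₃ * y + m₂ * z) : ℝ)) := by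
    show ((Rmap m₁ m₂ ((Rmap m₁ m₃ (x, (y * (m₂ * y + m₃ * z)) / (m₃ * y + m₂ * z))).1, (z * (m₂ * y + m₃ * z)) / (m₃ * y + m₂ * z))).1,
      (Rmap m₁ m₂ ((Rmap m₁ m₃ (x, (y * (m₂ * y + m₃ * z)) / (m₃ * y + m₂ * z))).1, (z * (m₂ * y + m₃ * z)) / (m₃ * y + m₂ * z))).2,
      (Rmap m₁ m₃ (x, (y * (m₂ * y + m₃ * z)) / (m₃ * y + m₂ * z))).2) = _
    rw [t2]
    show ((Rmap m₁ m₂ (((y * (m₂ * y + m₃ * z)) * (m₁ * (x * (m₃ * y + m₂ * z)) + m₃ * (y * (m₂ * y + m₃ * z)))) / (m₃ * (x * (m₃ * y + m₂ * z)) + m₁ * (y * (m₂ * y + m₃ * z))) / (m₃ * y + m₂ * z), (z * (m₂ * y + m₃ * z)) / (m₃ * y + m₂ * z))).1,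
      (Rmap m₁ m₂ (((y * (m₂ * y + m₃ * z)) * (m₁ * (x * (m₃ * y + m₂ * z)) + m₃ * (y * (m₂ * y + m₃ * z)))) / (m₃ * (x * (m₃ * y + m₂ * z)) + m₁ * (y * (m₂ * y + m₃ * z))) / (m₃ * y + m₂ * z), (z * (m₂ * y + m₃ * z)) / (m₃ * y + m₂ * z))).2,
      (((x * (m₃ * y + m₂ * z)) * (m₁ * (x * (m₃ * y + m₂ * z)) + m₃ * (y * (m₂ * y + m₃ * z)))) / (m₃ * (x * (m₃ * y + m₂ * z)) + m₁ * (y * (m₂ * y + m₃ * z))) / (m₃ * y + m₂ * z) : ℝ)) = _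
    rw [t3]
  rw [L, R, Prod.mk.injEq, Prod.mk.injEq]
  refine ⟨?_, ?_, ?_⟩
  all_goals simp only [div_div]
  all_goals rw [div_eq_div_iff (by positivity) (by positivity)]
  all_goals ring

/-- The relativistic collision map satisfies the parametric Yang–Baxter equation
on `(−c,c) × (−c,c) × (−c,c)`. -/
theorem collision_map_YB (c m₁ m₂ m₃ v₁ v₂ v₃ : ℝ)
    (hc : 0 < c) (hm₁ : 0 < m₁) (hm₂ : 0 < m₂) (hm₃ : 0 < m₃)
    (hv₁ : v₁ ∈ Set.Ioo (-c) c) (hv₂ : v₂ ∈ Set.Ioo (-c) c) (hv₃ : v₃ ∈ Set.Ioo (-c) c) :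
    (Rcol23 c m₂ m₃ ∘ Rcol13 c m₁ m₃ ∘ Rcol12 c m₁ m₂) (v₁, v₂, v₃) =
    (Rcol12 c m₁ m₂ ∘ Rcol13 c m₁ m₃ ∘ Rcol23 c m₂ m₃) (v₁, v₂, v₃) := by
  have hx₁ : 0 < phi c v₁ := phi_pos hv₁
  have hx₂ : 0 < phi c v₂ := phi_pos hv₂
  have hx₃ : 0 < phi c v₃ := phi_pos hv₃
  have e₁ : v₁ = phiInv c (phi c v₁) := (phiInv_phi hv₁).symm
  have e₂ : v₂ = phiInv c (phi c v₂) := (phiInv_phi hv₂).symm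
  have e₃ : v₃ = phiInv c (phi c v₃) := (phiInv_phi hv₃).symm
  rw [show ((v₁, v₂, v₃) : ℝ × ℝ × ℝ)
      = (phiInv c (phi c v₁), phiInv c (phi c v₂), phiInv c (phi c v₃)) by
    rw [← e₁, ← e₂, ← e₃]]
  generalize phi c v₁ = x₁ at hx₁
  generalize phi c v₂ = x₂ at hx₂
  generalize phi c v₃ = x₃ at hx₃
  have p12a : 0 < (Rmap m₁ m₂ (x₁, x₂)).1 := rmap_pos1 hm₁ hm₂ hx₁ hx₂
  have p12b : 0 < (Rmap m₁ m₂ (x₁, x₂)).2 := rmap_pos2 hm₁ hm₂ hx₁ hx₂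
  have p13a : 0 < (Rmap m₁ m₃ ((Rmap m₁ m₂ (x₁, x₂)).1, x₃)).1 :=
    rmap_pos1 hm₁ hm₃ p12a hx₃
  have p13b : 0 < (Rmap m₁ m₃ ((Rmap m₁ m₂ (x₁, x₂)).1, x₃)).2 :=
    rmap_pos2 hm₁ hm₃ p12a hx₃
  have q23a : 0 < (Rmap m₂ m₃ (x₂, x₃)).1 := rmap_pos1 hm₂ hm₃ hx₂ hx₃
  have q23b : 0 < (Rmap m₂ m₃ (x₂, x₃)).2 := rmap_pos2 hm₂ hm₃ hx₂ hx₃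
  have q13a : 0 < (Rmap m₁ m₃ (x₁, (Rmap m₂ m₃ (x₂, x₃)).2)).1 :=
    rmap_pos1 hm₁ hm₃ hx₁ q23b
  simp only [Function.comp_apply, Rcol12, Rcol13, Rcol23,
    rcol_apply hc hx₁ hx₂ m₁ m₂, rcol_apply hc hx₂ hx₃ m₂ m₃,
    rcol_apply hc p12a hx₃ m₁ m₃, rcol_apply hc hx₁ q23b m₁ m₃,
    rcol_apply hc p12b p13b m₂ m₃, rcol_apply hc q13a q23a m₁ m₂]
  have key := rmap_yb hm₁ hm₂ hm₃ hx₁ hx₂ hx₃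
  simp only [Prod.mk.injEq] at key
  rw [key.1, key.2.1, key.2.2]
end

section
/- The transfer map T_n : (x₁,…,x_n,y₁,…,y_n) ↦ (x₁',…,x_n', y₂',…,y_n',y₁'), where (x_i',y_i') = R_{α,β}(x_i,y_i) with R_{α,β}(x,y) = (y(αx+βy)/(βx+αy), x(αx+βy)/(βx+αy)), preserves the function H_n = (x₁⋯x_n)/(y₁⋯y_n) + (y₁⋯y_n)/(x₁⋯x_n). -/
open Finset

/-- The transfer map `T_n` on `(ℝ^n) × (ℝ^n)`: it applies `R_{α,β}` to each pair
`(x_i, y_i)` and cyclically shifts the second components. -/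
noncomputable def transfer (n : ℕ) [NeZero n] (α β : ℝ) :
    (Fin n → ℝ) × (Fin n → ℝ) → (Fin n → ℝ) × (Fin n → ℝ) :=
  fun p => (fun i => ufun α β (p.1 i) (p.2 i),
            fun i => vfun α β (p.1 (i + 1)) (p.2 (i + 1)))

/-- The transfer map preserves `H_n = (∏x_i)/(∏y_i) + (∏y_i)/(∏x_i)`. -/
theorem transfer_preserves_H (n : ℕ) [NeZero n] (α β : ℝ) (x y : Fin n → ℝ)
    (hα : 0 < α) (hβ : 0 < β) (hx : ∀ i, 0 < x i) (hy : ∀ i, 0 < y i) :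
    (∏ i, (transfer n α β (x, y)).1 i) / (∏ i, (transfer n α β (x, y)).2 i) +
      (∏ i, (transfer n α β (x, y)).2 i) / (∏ i, (transfer n α β (x, y)).1 i) =
    (∏ i, x i) / (∏ i, y i) + (∏ i, y i) / (∏ i, x i) := by
  have hden : ∀ i, 0 < β * x i + α * y i :=
    fun i => add_pos (mul_pos hβ (hx i)) (mul_pos hα (hy i))
  have hnum : ∀ i, 0 < α * x i + β * y i :=
    fun i => add_pos (mul_pos hα (hx i)) (mul_pos hβ (hy i))
  set P : ℝ := ∏ i, (α * x i + β * y i) / (β * x i + α * y i) with hP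
  have hPpos : 0 < P := Finset.prod_pos fun i _ => div_pos (hnum i) (hden i)
  have hA : (∏ i, (transfer n α β (x, y)).1 i) = (∏ i, y i) * P := by
    rw [hP, ← Finset.prod_mul_distrib]
    refine Finset.prod_congr rfl fun i _ => ?_
    simp [transfer, ufun, mul_div_assoc]
  have hB : (∏ i, (transfer n α β (x, y)).2 i) = (∏ i, x i) * P := by
    have h1 : (∏ i, (transfer n α β (x, y)).2 i)
        = ∏ i, (x (i + 1) * ((α * x (i + 1) + β * y (i + 1)) / (β * x (i + 1) + α * y (i + 1)))) := by
      refine Finset.prod_congr rfl fun i _ => ?_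
      simp [transfer, vfun, mul_div_assoc]
    rw [h1,
        Fintype.prod_equiv (Equiv.addRight (1 : Fin n))
          (fun i => x (i + 1) * ((α * x (i + 1) + β * y (i + 1)) / (β * x (i + 1) + α * y (i + 1))))
          (fun i => x i * ((α * x i + β * y i) / (β * x i + α * y i))) (fun i => rfl),
        Finset.prod_mul_distrib, hP]
  have hxp : 0 < ∏ i, x i := Finset.prod_pos fun i _ => hx i
  have hyp : 0 < ∏ i, y i := Finset.prod_pos fun i _ => hy i
  rw [hA, hB]
  rw [mul_div_mul_right _ _ hPpos.ne', mul_div_mul_right _ _ hPpos.ne', add_comm]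
end

section
/- The transfer map T_n of the Yang–Baxter map R_{α,β}(x,y) = (y(αx+βy)/(βx+αy), x(αx+βy)/(βx+αy)) preserves the functions E_n = Σ_{i=1}^n (α(x_i + 1/x_i) + β(y_i + 1/y_i)) and P_n = Σ_{i=1}^n (α(x_i − 1/x_i) + β(y_i − 1/y_i)). -/
open Finset

lemma key_E (α β x y : ℝ) (hα : 0 < α) (hβ : 0 < β) (hx : 0 < x) (hy : 0 < y) :
    α * (ufun α β x y + 1 / ufun α β x y) + β * (vfun α β x y + 1 / vfun α β x y)
      = α * (x + 1 / x) + β * (y + 1 / y) := by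
  have hs : 0 < α * x + β * y := by positivity
  have ht : 0 < β * x + α * y := by positivity
  unfold ufun vfun
  field_simp
  ring

lemma key_P (α β x y : ℝ) (hα : 0 < α) (hβ : 0 < β) (hx : 0 < x) (hy : 0 < y) :
    α * (ufun α β x y - 1 / ufun α β x y) + β * (vfun α β x y - 1 / vfun α β x y)
      = α * (x - 1 / x) + β * (y - 1 / y) := by
  have hs : 0 < α * x + β * y := by positivity
  have ht : 0 < β * x + α * y := by positivity
  unfold ufun vfun
  field_simp
  ring

/-- The transfer map preserves the relativistic energy `E_n` and momentum `P_n`. -/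
theorem transfer_preserves_E_P (n : ℕ) [NeZero n] (α β : ℝ) (x y : Fin n → ℝ)
    (hα : 0 < α) (hβ : 0 < β) (hx : ∀ i, 0 < x i) (hy : ∀ i, 0 < y i) :
    (∑ i, (α * ((transfer n α β (x, y)).1 i + 1 / (transfer n α β (x, y)).1 i) +
           β * ((transfer n α β (x, y)).2 i + 1 / (transfer n α β (x, y)).2 i)) =
      ∑ i, (α * (x i + 1 / x i) + β * (y i + 1 / y i))) ∧
    (∑ i, (α * ((transfer n α β (x, y)).1 i - 1 / (transfer n α β (x, y)).1 i) +
           β * ((transfer n α β (x, y)).2 i - 1 / (transfer n α β (x, y)).2 i)) =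
      ∑ i, (α * (x i - 1 / x i) + β * (y i - 1 / y i))) := by
  simp only [transfer]
  constructor
  · rw [Finset.sum_add_distrib]
    conv_lhs =>
      rw [show (∑ i : Fin n, β * (vfun α β (x (i + 1)) (y (i + 1)) +
          1 / vfun α β (x (i + 1)) (y (i + 1)))) =
          ∑ i : Fin n, β * (vfun α β (x i) (y i) + 1 / vfun α β (x i) (y i)) from
        Fintype.sum_equiv (Equiv.addRight (1 : Fin n)) _ _ (fun i => rfl)]
    rw [← Finset.sum_add_distrib]
    exact Finset.sum_congr rfl fun i _ => key_E α β (x i) (y i) hα hβ (hx i) (hy i)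
  · rw [Finset.sum_add_distrib]
    conv_lhs =>
      rw [show (∑ i : Fin n, β * (vfun α β (x (i + 1)) (y (i + 1)) -
          1 / vfun α β (x (i + 1)) (y (i + 1)))) =
          ∑ i : Fin n, β * (vfun α β (x i) (y i) - 1 / vfun α β (x i) (y i)) from
        Fintype.sum_equiv (Equiv.addRight (1 : Fin n)) _ _ (fun i => rfl)]
    rw [← Finset.sum_add_distrib]
    exact Finset.sum_congr rfl fun i _ => key_P α β (x i) (y i) hα hβ (hx i) (hy i)
end

section
/- If (X₁,…,X_n,Y₁,…,Y_n) = T_n(x₁,…,x_n,y₁,…,y_n) for the transfer map of R_{α,β}(x,y) = (y(αx+βy)/(βx+αy), x(αx+βy)/(βx+αy)), then the Jacobian determinant of T_n equals (x₁⋯x_n y₁⋯y_n)^{−1} · (−1) · (X₁⋯X_n Y₁⋯Y_n); equivalently, T_n multiplies the density 1/(x₁⋯x_n y₁⋯y_n) volume form by −1. -/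
/-!
The Yang–Baxter map is `R(x, y) = r(x, y) • (y, x)` with `r = (αx + βy) / (βx + αy)`. Since `r`
is homogeneous of degree `0`, Euler's relation `Dr(x, y) (x, y) = 0` makes the Jacobian of `R`
equal to `-r²`, i.e. `-uv / (xy)`. The transfer map applies `R` to every pair `(xᵢ, yᵢ)` and then
shifts the second block cyclically, a permutation of sign `(-1)^(n-1)`. Hence
`det DTₙ = (-1)^(n-1) (-1)^n ∏ rᵢ² = -∏ rᵢ²`, while `∏ Xᵢ ∏ Yᵢ = ∏ xᵢ ∏ yᵢ ∏ rᵢ²`.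
-/

open Finset

open Filter Topology

section LinearAlgebra

variable {R : Type*} [CommRing R] {ι : Type*} [Fintype ι] [DecidableEq ι]

theorem Matrix.det_fromBlocks_diagonal (a b c d : ι → R) :
    (fromBlocks (diagonal a) (diagonal b) (diagonal c) (diagonal d)).det =
      ∏ i, (a i * d i - b i * c i) := by
  let e : Fin 2 × ι ≃ ι ⊕ ι :=
    (finTwoEquiv.prodCongr (Equiv.refl ι)).trans (Equiv.boolProdEquivSum ι)
  have hblock : fromBlocks (diagonal a) (diagonal b) (diagonal c) (diagonal d) =
      reindex e e (blockDiagonal fun i => !![a i, b i; c i, d i]) := by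
    ext (i | i) (j | j) <;> simp [e, blockDiagonal_apply, diagonal_apply, finTwoEquiv]
  rw [hblock, det_reindex_self, det_blockDiagonal]
  simp [det_fin_two_of]

theorem LinearMap.det_prod_eq_mul_sub_mul (f g : R × R →ₗ[R] R) :
    LinearMap.det (f.prod g) = f (1, 0) * g (0, 1) - f (0, 1) * g (1, 0) := by
  rw [← LinearMap.det_toMatrix (Module.Basis.finTwoProd R), Matrix.det_fin_two]
  simp [LinearMap.toMatrix_apply]

/-- The Jacobian of `q ↦ r q • (q.2, q.1)` at `(a, b)`, with `φ = Dr (a, b)` and `c = r (a, b)`. -/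
theorem LinearMap.det_smul_add_snd_prod_smul_add_fst (φ : R × R →ₗ[R] R) (a b c : R)
    (hφ : φ (a, b) = 0) :
    LinearMap.det ((b • φ + c • snd R R R).prod (a • φ + c • fst R R R)) = -c ^ 2 := by
  have hφ_apply : φ (a, b) = a * φ (1, 0) + b * φ (0, 1) := by
    rw [← smul_eq_mul, ← smul_eq_mul, ← map_smul, ← map_smul, ← map_add]
    simp
  rw [LinearMap.det_prod_eq_mul_sub_mul]
  simp only [add_apply, smul_apply, snd_apply, fst_apply, smul_eq_mul]
  linear_combination (-c) * (hφ_apply.symm.trans hφ)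

theorem LinearMap.det_funLeft (σ : Equiv.Perm ι) :
    LinearMap.det (LinearMap.funLeft R R σ) = Equiv.Perm.sign σ := by
  have h : LinearMap.funLeft R R σ =
      Matrix.toLin' ((1 : Matrix ι ι R).submatrix σ (Equiv.refl ι)) := by
    rw [Matrix.toLin'_submatrix]
    ext
    simp
  rw [h, LinearMap.det_toLin', Equiv.coe_refl, Matrix.det_permute]
  simp

theorem LinearMap.det_pi_prod_pi (F G : ι → R × R →ₗ[R] R) :
    LinearMap.det ((LinearMap.pi fun i => F i ∘ₗ (proj i).prodMap (proj i)).prod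
      (LinearMap.pi fun i => G i ∘ₗ (proj i).prodMap (proj i))) =
      ∏ i, LinearMap.det ((F i).prod (G i)) := by
  let b := (Pi.basisFun R ι).prod (Pi.basisFun R ι)
  have hmatrix : LinearMap.toMatrix b b
      ((LinearMap.pi fun i => F i ∘ₗ (proj i).prodMap (proj i)).prod
        (LinearMap.pi fun i => G i ∘ₗ (proj i).prodMap (proj i))) =
      Matrix.fromBlocks
        (Matrix.diagonal fun i => F i (1, 0)) (Matrix.diagonal fun i => F i (0, 1))
        (Matrix.diagonal fun i => G i (1, 0)) (Matrix.diagonal fun i => G i (0, 1)) := by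
    ext (i | i) (j | j) <;>
      simp [b, LinearMap.toMatrix_apply, Matrix.diagonal_apply, Pi.single_apply] <;>
      split_ifs <;> simp [Prod.mk_zero_zero]
  rw [← LinearMap.det_toMatrix b, hmatrix, Matrix.det_fromBlocks_diagonal]
  simp [LinearMap.det_prod_eq_mul_sub_mul]

end LinearAlgebra

theorem Equiv.Perm.sign_addRight_one (n : ℕ) [NeZero n] :
    Equiv.Perm.sign (Equiv.addRight (1 : Fin n)) = (-1) ^ (n - 1) := by
  have h : Equiv.addRight (1 : Fin n) = finRotate n := by
    ext i
    simp [finRotate_apply]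
  rw [h, sign_finRotate]

theorem HasFDerivAt.apply_self_eq_zero_of_smul_invariant {𝕜 E F : Type*}
    [NontriviallyNormedField 𝕜] [NormedAddCommGroup E] [NormedSpace 𝕜 E]
    [NormedAddCommGroup F] [NormedSpace 𝕜 F] {f : E → F} {f' : E →L[𝕜] F} {p : E}
    (hf : HasFDerivAt f f' p) (hinv : ∀ᶠ t in 𝓝 (1 : 𝕜), f (t • p) = f p) : f' p = 0 := by
  have hline : HasDerivAt (fun t : 𝕜 => f (t • p)) (f' p) 1 := by
    simpa [Function.comp_def] using
      hf.comp_hasDerivAt_of_eq (1 : 𝕜) ((hasDerivAt_id (1 : 𝕜)).smul_const p) (one_smul 𝕜 p).symm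
  exact hline.unique ((hasDerivAt_const (1 : 𝕜) (f p)).congr_of_eventuallyEq hinv)

open ContinuousLinearMap in
theorem HasFDerivAt.pi_prod_pi {𝕜 ι : Type*} [NontriviallyNormedField 𝕜] [Fintype ι]
    {f g : 𝕜 × 𝕜 → 𝕜} {f' g' : ι → 𝕜 × 𝕜 →L[𝕜] 𝕜} {x y : ι → 𝕜}
    (hf : ∀ i, HasFDerivAt f (f' i) (x i, y i)) (hg : ∀ i, HasFDerivAt g (g' i) (x i, y i)) :
    HasFDerivAt
      (fun p : (ι → 𝕜) × (ι → 𝕜) => (fun i => f (p.1 i, p.2 i), fun i => g (p.1 i, p.2 i)))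
      ((pi fun i => (f' i).comp ((proj i).prodMap (proj i))).prod
        (pi fun i => (g' i).comp ((proj i).prodMap (proj i)))) (x, y) := by
  have hproj (i : ι) : HasFDerivAt (fun p : (ι → 𝕜) × (ι → 𝕜) => (p.1 i, p.2 i))
      ((proj (R := 𝕜) (φ := fun _ => 𝕜) i).prodMap (proj i)) (x, y) :=
    ((proj (R := 𝕜) (φ := fun _ => 𝕜) i).prodMap (proj i)).hasFDerivAt (x := (x, y))
  exact .prodMk (hasFDerivAt_pi.2 fun i => (hf i).comp (x, y) (hproj i))
    (hasFDerivAt_pi.2 fun i => (hg i).comp (x, y) (hproj i))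

noncomputable def ybRatio (α β : ℝ) (p : ℝ × ℝ) : ℝ :=
  (α * p.1 + β * p.2) / (β * p.1 + α * p.2)

theorem ufun_eq_mul_ybRatio (α β : ℝ) (p : ℝ × ℝ) : ufun α β p.1 p.2 = p.2 * ybRatio α β p :=
  mul_div_assoc _ _ _

theorem vfun_eq_mul_ybRatio (α β : ℝ) (p : ℝ × ℝ) : vfun α β p.1 p.2 = p.1 * ybRatio α β p :=
  mul_div_assoc _ _ _

theorem ybRatio_smul (α β : ℝ) (p : ℝ × ℝ) {t : ℝ} (ht : t ≠ 0) :
    ybRatio α β (t • p) = ybRatio α β p := by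
  simp only [ybRatio, Prod.smul_fst, Prod.smul_snd, smul_eq_mul]
  rw [show α * (t * p.1) + β * (t * p.2) = t * (α * p.1 + β * p.2) by ring,
    show β * (t * p.1) + α * (t * p.2) = t * (β * p.1 + α * p.2) by ring,
    mul_div_mul_left _ _ ht]

theorem hasFDerivAt_ybRatio (α β : ℝ) {x y : ℝ} (hs : β * x + α * y ≠ 0) :
    HasFDerivAt (ybRatio α β) (fderiv ℝ (ybRatio α β) (x, y)) (x, y) :=
  DifferentiableAt.hasFDerivAt <| by unfold ybRatio; fun_prop (disch := exact hs)

theorem fderiv_ybRatio_apply_self (α β : ℝ) {x y : ℝ} (hs : β * x + α * y ≠ 0) :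
    fderiv ℝ (ybRatio α β) (x, y) (x, y) = 0 :=
  (hasFDerivAt_ybRatio α β hs).apply_self_eq_zero_of_smul_invariant <|
    (eventually_ne_nhds one_ne_zero).mono fun _ ht => ybRatio_smul α β (x, y) ht

theorem hasFDerivAt_ufun (α β : ℝ) {x y : ℝ} (hs : β * x + α * y ≠ 0) :
    HasFDerivAt (fun q : ℝ × ℝ => ufun α β q.1 q.2) (y • fderiv ℝ (ybRatio α β) (x, y) +
      ybRatio α β (x, y) • ContinuousLinearMap.snd ℝ ℝ ℝ) (x, y) := by
  simpa only [ufun_eq_mul_ybRatio] using hasFDerivAt_snd.fun_mul (hasFDerivAt_ybRatio α β hs)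

theorem hasFDerivAt_vfun (α β : ℝ) {x y : ℝ} (hs : β * x + α * y ≠ 0) :
    HasFDerivAt (fun q : ℝ × ℝ => vfun α β q.1 q.2) (x • fderiv ℝ (ybRatio α β) (x, y) +
      ybRatio α β (x, y) • ContinuousLinearMap.fst ℝ ℝ ℝ) (x, y) := by
  simpa only [vfun_eq_mul_ybRatio] using hasFDerivAt_fst.fun_mul (hasFDerivAt_ybRatio α β hs)

theorem det_fderiv_transfer (n : ℕ) [NeZero n] (α β : ℝ) (x y : Fin n → ℝ)
    (hs : ∀ i, β * x i + α * y i ≠ 0) :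
    LinearMap.det (fderiv ℝ (transfer n α β) (x, y)).toLinearMap =
      (-1) ^ (n - 1) * ∏ i, -ybRatio α β (x i, y i) ^ 2 := by
  let shift := ((LinearMap.id (R := ℝ) (M := Fin n → ℝ)).prodMap
    (LinearMap.funLeft ℝ ℝ (Equiv.addRight (1 : Fin n)))).toContinuousLinearMap
  have hΦ := HasFDerivAt.pi_prod_pi (fun i => hasFDerivAt_ufun α β (hs i))
    (fun i => hasFDerivAt_vfun α β (hs i))
  -- `transfer` is, definitionally, the componentwise Yang–Baxter map followed by `shift`
  have hT : HasFDerivAt (transfer n α β) (shift.comp _) (x, y) := shift.hasFDerivAt.comp (x, y) hΦ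
  rw [hT.fderiv, ContinuousLinearMap.toLinearMap_comp, LinearMap.det_comp,
    LinearMap.coe_toContinuousLinearMap, LinearMap.det_prodMap, LinearMap.det_id, one_mul,
    LinearMap.det_funLeft, Equiv.Perm.sign_addRight_one]
  simp only [ContinuousLinearMap.coe_prod, ContinuousLinearMap.coe_pi,
    ContinuousLinearMap.toLinearMap_comp, ContinuousLinearMap.coe_prodMap,
    ContinuousLinearMap.coe_proj, LinearMap.det_pi_prod_pi, ContinuousLinearMap.toLinearMap_add,
    ContinuousLinearMap.toLinearMap_smul, ContinuousLinearMap.coe_fst, ContinuousLinearMap.coe_snd]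
  rw [prod_congr rfl fun i _ => LinearMap.det_smul_add_snd_prod_smul_add_fst _ _ _ _
    (fderiv_ybRatio_apply_self α β (hs i))]
  simp

/-- The transfer map multiplies the density `1/(x₁⋯x_n y₁⋯y_n)` volume form by `−1`:
its Jacobian determinant times `(X₁⋯X_n Y₁⋯Y_n)⁻¹` equals `−(x₁⋯x_n y₁⋯y_n)⁻¹`. -/
theorem transfer_jacobian (n : ℕ) [NeZero n] (α β : ℝ) (x y : Fin n → ℝ)
    (hα : 0 < α) (hβ : 0 < β) (hx : ∀ i, 0 < x i) (hy : ∀ i, 0 < y i) :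
    LinearMap.det ((fderiv ℝ (transfer n α β) (x, y)).toLinearMap) *
      ((∏ i, (transfer n α β (x, y)).1 i) * ∏ i, (transfer n α β (x, y)).2 i)⁻¹ =
    -((∏ i, x i) * ∏ i, y i)⁻¹ := by
  have hs (i : Fin n) : β * x i + α * y i ≠ 0 := by
    have := hx i; have := hy i; positivity
  have hr : ∏ i, ybRatio α β (x i, y i) ≠ 0 := prod_ne_zero_iff.2 fun i _ => by
    have := hx i; have := hy i; unfold ybRatio; positivity
  have hfst : ∏ i, (transfer n α β (x, y)).1 i = (∏ i, y i) * ∏ i, ybRatio α β (x i, y i) := by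
    rw [← prod_mul_distrib]
    exact prod_congr rfl fun i _ => ufun_eq_mul_ybRatio α β (x i, y i)
  have hsnd : ∏ i, (transfer n α β (x, y)).2 i = (∏ i, x i) * ∏ i, ybRatio α β (x i, y i) := by
    rw [← prod_mul_distrib]
    exact (Equiv.prod_comp (Equiv.addRight 1) fun i => vfun α β (x i) (y i)).trans
      (prod_congr rfl fun i _ => vfun_eq_mul_ybRatio α β (x i, y i))
  have hsign : (-1 : ℝ) ^ (n - 1) * (-1) ^ n = -1 := by
    rw [← pow_add, Odd.neg_one_pow ⟨n - 1, by have := NeZero.pos n; omega⟩]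
  rw [det_fderiv_transfer n α β x y hs, hfst, hsnd, prod_neg, prod_pow, card_fin]
  field_simp
  rw [hsign]
  ring
end

section
/- Let L(x,α,ζ) = [[ζ, αx],[α/x, ζ]] and define the monodromy matrix M_n(x,y,ζ) = Π_{i=0}^{n-1} L(y_{n−i},β,ζ)L(x_{n−i},α,ζ). Then L(y₁',β,ζ)·M_n(x,y,ζ) = M_n(T_n(x,y),ζ)·L(y₁',β,ζ), where (x₁',y₁') = R_{α,β}(x₁,y₁) and T_n is the transfer map; consequently the trace of M_n is invariant under T_n. -/
open Matrix Finset

/-- The monodromy matrix `M_n = L(y_n,β,ζ)L(x_n,α,ζ)⋯L(y₁,β,ζ)L(x₁,α,ζ)`. -/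
noncomputable def monodromy (n : ℕ) (α β ζ : ℝ) (x y : Fin n → ℝ) :
    Matrix (Fin 2) (Fin 2) ℝ :=
  (List.ofFn (fun i : Fin n => Lax (y i.rev) β ζ * Lax (x i.rev) α ζ)).prod

/-- Local Yang–Baxter refactorization of a pair of Lax matrices. -/
lemma lax_yb (α β ζ x y : ℝ) (hα : 0 < α) (hβ : 0 < β) (hx : 0 < x) (hy : 0 < y) :
    Lax y β ζ * Lax x α ζ = Lax (ufun α β x y) α ζ * Lax (vfun α β x y) β ζ := by
  have hd : (0:ℝ) < β * x + α * y := by positivity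
  have hn : (0:ℝ) < α * x + β * y := by positivity
  have hu : ufun α β x y ≠ 0 := by
    have : 0 < ufun α β x y := by unfold ufun; positivity
    exact this.ne'
  have hv : vfun α β x y ≠ 0 := by
    have : 0 < vfun α β x y := by unfold vfun; positivity
    exact this.ne'
  unfold Lax ufun vfun
  ext i j
  fin_cases i <;> fin_cases j <;>
    simp [Matrix.mul_apply, Fin.sum_univ_succ] <;>
    field_simp <;> ring

/-- A decreasing-index product `f (n-1) * ⋯ * f 0`. -/
noncomputable def pprod (f : ℕ → Matrix (Fin 2) (Fin 2) ℝ) : ℕ → Matrix (Fin 2) (Fin 2) ℝ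
  | 0 => 1
  | m + 1 => f m * pprod f m

lemma pprod_congr {f g : ℕ → Matrix (Fin 2) (Fin 2) ℝ} (n : ℕ)
    (h : ∀ j < n, f j = g j) : pprod f n = pprod g n := by
  induction n with
  | zero => rfl
  | succ m ih =>
    simp only [pprod, h m (Nat.lt_succ_self m),
      ih fun j hj => h j (hj.trans (Nat.lt_succ_self m))]

lemma ofFn_rev_prod (g : ℕ → Matrix (Fin 2) (Fin 2) ℝ) (n : ℕ) :
    (List.ofFn fun i : Fin n => g (i.rev : ℕ)).prod = pprod g n := by
  induction n with
  | zero => simp [pprod]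
  | succ m ih =>
    rw [List.ofFn_succ]
    simp only [List.prod_cons, Fin.rev_succ, Fin.coe_castSucc, ih, Fin.rev_zero,
      Fin.val_last, pprod]

lemma key (A B : ℕ → Matrix (Fin 2) (Fin 2) ℝ) (m : ℕ) :
    pprod (fun j => B j * A j) (m + 1) =
      B m * pprod (fun j => A (j + 1) * B j) m * A 0 := by
  induction m with
  | zero => simp [pprod, mul_assoc]
  | succ k ih =>
    show (B (k+1) * A (k+1)) * pprod (fun j => B j * A j) (k+1) = _
    rw [ih]
    show _ = B (k+1) * ((A (k+1) * B k) * pprod (fun j => A (j+1) * B j) k) * A 0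
    noncomm_ring

/-- Core cyclic intertwining identity for abstract factors. -/
lemma core (A B : ℕ → Matrix (Fin 2) (Fin 2) ℝ) (m : ℕ) :
    A 0 * pprod (fun j => B j * A j) (m + 1) =
      pprod (fun j => A ((j + 1) % (m + 1)) * B j) (m + 1) * A 0 ∧
    (pprod (fun j => A ((j + 1) % (m + 1)) * B j) (m + 1)).trace =
      (pprod (fun j => B j * A j) (m + 1)).trace := by
  have h1 : pprod (fun j => B j * A j) (m + 1) =
      B m * pprod (fun j => A (j + 1) * B j) m * A 0 := key A B m
  have h2 : pprod (fun j => A ((j + 1) % (m + 1)) * B j) (m + 1) =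
      A 0 * (B m * pprod (fun j => A (j + 1) * B j) m) := by
    show A ((m + 1) % (m + 1)) * B m * pprod (fun j => A ((j + 1) % (m + 1)) * B j) m = _
    rw [Nat.mod_self, pprod_congr m (fun j hj => by rw [Nat.mod_eq_of_lt (by omega)]),
      mul_assoc]
  constructor
  · rw [h1, h2]; noncomm_ring
  · rw [h1, h2, Matrix.trace_mul_comm, mul_assoc]

/-- Intertwining relation `L(y₁',β,ζ)·M_n(x,y) = M_n(T_n(x,y))·L(y₁',β,ζ)` for
the monodromy matrix, and consequently the trace of the monodromy matrix is
invariant under the transfer map. -/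
theorem monodromy_intertwining (n : ℕ) [NeZero n] (α β ζ : ℝ) (x y : Fin n → ℝ)
    (hα : 0 < α) (hβ : 0 < β) (hx : ∀ i, 0 < x i) (hy : ∀ i, 0 < y i) :
    Lax (vfun α β (x 0) (y 0)) β ζ * monodromy n α β ζ x y =
      monodromy n α β ζ (transfer n α β (x, y)).1 (transfer n α β (x, y)).2 *
        Lax (vfun α β (x 0) (y 0)) β ζ ∧
    (monodromy n α β ζ (transfer n α β (x, y)).1 (transfer n α β (x, y)).2).trace =
      (monodromy n α β ζ x y).trace := by
  obtain ⟨m, rfl⟩ : ∃ m, n = m + 1 :=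
    ⟨n - 1, (Nat.succ_pred_eq_of_ne_zero (NeZero.ne n)).symm⟩
  have hnpos : 0 < m + 1 := Nat.succ_pos m
  -- ℕ-extensions of the sequences
  let X : ℕ → ℝ := fun j => x ⟨j % (m + 1), Nat.mod_lt _ hnpos⟩
  let Y : ℕ → ℝ := fun j => y ⟨j % (m + 1), Nat.mod_lt _ hnpos⟩
  have hXv : ∀ i : Fin (m + 1), X (i : ℕ) = x i := fun i =>
    congrArg x (Fin.ext (Nat.mod_eq_of_lt i.isLt))
  have hYv : ∀ i : Fin (m + 1), Y (i : ℕ) = y i := fun i =>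
    congrArg y (Fin.ext (Nat.mod_eq_of_lt i.isLt))
  let A : ℕ → Matrix (Fin 2) (Fin 2) ℝ := fun j => Lax (vfun α β (X j) (Y j)) β ζ
  let B : ℕ → Matrix (Fin 2) (Fin 2) ℝ := fun j => Lax (ufun α β (X j) (Y j)) α ζ
  have hsucc : ∀ i : Fin (m + 1), ((i + 1 : Fin (m + 1)) : ℕ) = ((i : ℕ) + 1) % (m + 1) := by
    intro i
    simp only [Fin.add_def, Fin.val_one']
    conv_rhs => rw [Nat.add_mod]
    conv_lhs => rw [Nat.add_mod]
    rw [Nat.mod_mod_of_dvd _ dvd_rfl]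
  have hM : monodromy (m + 1) α β ζ x y = pprod (fun j => B j * A j) (m + 1) := by
    unfold monodromy
    rw [← ofFn_rev_prod (fun j => B j * A j) (m + 1)]
    refine congrArg List.prod (congrArg List.ofFn (funext fun i => ?_))
    show Lax (y _) β ζ * Lax (x _) α ζ = B _ * A _
    rw [← hXv, ← hYv]
    exact lax_yb α β ζ _ _ hα hβ (hx _) (hy _)
  have hM' : monodromy (m + 1) α β ζ (transfer (m + 1) α β (x, y)).1
      (transfer (m + 1) α β (x, y)).2 =
      pprod (fun j => A ((j + 1) % (m + 1)) * B j) (m + 1) := by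
    unfold monodromy transfer
    rw [← ofFn_rev_prod (fun j => A ((j + 1) % (m + 1)) * B j) (m + 1)]
    refine congrArg List.prod (congrArg List.ofFn (funext fun i => ?_))
    show Lax (vfun α β (x (_ + 1)) (y (_ + 1))) β ζ * Lax (ufun α β (x _) (y _)) α ζ = _
    rw [← hXv i.rev, ← hYv i.rev, ← hXv (i.rev + 1), ← hYv (i.rev + 1), hsucc]
  have hA0 : Lax (vfun α β (x 0) (y 0)) β ζ = A 0 := by
    show _ = Lax (vfun α β (X 0) (Y 0)) β ζ
    rw [show X 0 = x 0 from hXv 0, show Y 0 = y 0 from hYv 0]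
  obtain ⟨hc1, hc2⟩ := core A B m
  refine ⟨?_, ?_⟩
  · rw [hM, hM', hA0]; exact hc1
  · rw [hM, hM']; exact hc2
end

section
/- The set M = {(0,x,0,y) : x,y ∈ ℝ_{>0}} is invariant under the four-dimensional Yang–Baxter map R̃_{α,β} determined by the Lax matrix L̃(x₁,x₂,α,ζ) = [[ζ/α + x₁, x₂],[(1−x₁²)/x₂, ζ/α − x₁]]: if x₁ = y₁ = 0 then the images satisfy u₁ = v₁ = 0, and on M the map R̃_{α,β} reduces to R_{α,β}(x₂,y₂) = (y₂(αx₂+βy₂)/(βx₂+αy₂), x₂(αx₂+βy₂)/(βx₂+αy₂)) up to the equivalence of Lax matrices. -/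
/-!
Compare coefficients of `ζ` in the first row of the Lax equation. The linear terms give
`β v₁ + α u₁ = α x₁ + β y₁` and `β v₂ + α u₂ = α x₂ + β y₂`, the constant term of the
off-diagonal entry gives `u₁ v₂ - u₂ v₁ = y₁ x₂ - y₂ x₁`. For `x₁ = y₁ = 0` these combine to
`u₁ (β v₂ + α u₂) = 0`, so `u₁ = v₁ = 0` by positivity. The constant term of the diagonal entry
then reads `u₂ / v₂ = y₂ / x₂`, and with the linear relation this determines `(u₂, v₂)`.
-/

open Matrix

/-- The Lax matrix `L̃(x₁,x₂,α,ζ) = [[ζ/α + x₁, x₂],[(1−x₁²)/x₂, ζ/α − x₁]]`. -/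
noncomputable def LaxT (x₁ x₂ α ζ : ℝ) : Matrix (Fin 2) (Fin 2) ℝ :=
  !![ζ / α + x₁, x₂; (1 - x₁ ^ 2) / x₂, ζ / α - x₁]

/-- `LaxEquation α β x₁ x₂ y₁ y₂ u₁ u₂ v₁ v₂` says
`R̃_{α,β}((x₁,x₂),(y₁,y₂)) = ((u₁,u₂),(v₁,v₂))`. -/
def LaxEquation (α β x₁ x₂ y₁ y₂ u₁ u₂ v₁ v₂ : ℝ) : Prop :=
  ∀ ζ : ℝ, LaxT u₁ u₂ α ζ * LaxT v₁ v₂ β ζ = LaxT y₁ y₂ β ζ * LaxT x₁ x₂ α ζ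

namespace LaxT

variable {a₁ a₂ b₁ b₂ α β ζ : ℝ}

@[simp]
theorem mul_apply_zero_zero :
    (LaxT a₁ a₂ α ζ * LaxT b₁ b₂ β ζ) 0 0 =
      (ζ / α + a₁) * (ζ / β + b₁) + a₂ * ((1 - b₁ ^ 2) / b₂) := by
  simp [LaxT, mul_apply, Fin.sum_univ_two]

@[simp]
theorem mul_apply_zero_one :
    (LaxT a₁ a₂ α ζ * LaxT b₁ b₂ β ζ) 0 1 = (ζ / α + a₁) * b₂ + a₂ * (ζ / β - b₁) := by
  simp [LaxT, mul_apply, Fin.sum_univ_two]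

end LaxT

namespace LaxEquation

variable {α β x₁ x₂ y₁ y₂ u₁ u₂ v₁ v₂ : ℝ}

theorem apply_zero_zero (h : LaxEquation α β x₁ x₂ y₁ y₂ u₁ u₂ v₁ v₂) (ζ : ℝ) :
    (ζ / α + u₁) * (ζ / β + v₁) + u₂ * ((1 - v₁ ^ 2) / v₂) =
      (ζ / β + y₁) * (ζ / α + x₁) + y₂ * ((1 - x₁ ^ 2) / x₂) := by
  simpa using congrFun (congrFun (h ζ) 0) 0

theorem apply_zero_one (h : LaxEquation α β x₁ x₂ y₁ y₂ u₁ u₂ v₁ v₂) (ζ : ℝ) :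
    (ζ / α + u₁) * v₂ + u₂ * (ζ / β - v₁) = (ζ / β + y₁) * x₂ + y₂ * (ζ / α - x₁) := by
  simpa using congrFun (congrFun (h ζ) 0) 1

theorem linear_term_zero_zero (h : LaxEquation α β x₁ x₂ y₁ y₂ u₁ u₂ v₁ v₂) (hα : α ≠ 0)
    (hβ : β ≠ 0) :
    β * v₁ + α * u₁ = α * x₁ + β * y₁ := by
  have h₀ := h.apply_zero_zero 0
  have h₁ := h.apply_zero_zero 1
  field_simp at h₀ h₁
  linear_combination h₁ - h₀

theorem linear_term_zero_one (h : LaxEquation α β x₁ x₂ y₁ y₂ u₁ u₂ v₁ v₂) (hα : α ≠ 0)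
    (hβ : β ≠ 0) :
    β * v₂ + α * u₂ = α * x₂ + β * y₂ := by
  have h₀ := h.apply_zero_one 0
  have h₁ := h.apply_zero_one 1
  field_simp at h₀ h₁
  linear_combination h₁ - h₀

theorem constant_term_zero_one (h : LaxEquation α β x₁ x₂ y₁ y₂ u₁ u₂ v₁ v₂) :
    u₁ * v₂ - u₂ * v₁ = y₁ * x₂ - y₂ * x₁ := by
  have h₀ := h.apply_zero_one 0
  simp only [zero_div, zero_add, zero_sub] at h₀
  linear_combination h₀

theorem constant_term_zero_zero (h : LaxEquation α β x₁ x₂ y₁ y₂ u₁ u₂ v₁ v₂) :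
    u₁ * v₁ + u₂ * ((1 - v₁ ^ 2) / v₂) = y₁ * x₁ + y₂ * ((1 - x₁ ^ 2) / x₂) := by
  simpa using h.apply_zero_zero 0

theorem fst_eq_zero (h : LaxEquation α β 0 x₂ 0 y₂ u₁ u₂ v₁ v₂) (hα : α ≠ 0) (hβ : β ≠ 0)
    (hs : β * v₂ + α * u₂ ≠ 0) : u₁ = 0 ∧ v₁ = 0 := by
  have hfst : β * v₁ + α * u₁ = 0 := by simpa using h.linear_term_zero_zero hα hβ
  have hcross : u₁ * v₂ - u₂ * v₁ = 0 := by simpa using h.constant_term_zero_one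
  have hu₁ : u₁ * (β * v₂ + α * u₂) = 0 := by linear_combination β * hcross + u₂ * hfst
  have hu₁ : u₁ = 0 := (mul_eq_zero.mp hu₁).resolve_right hs
  refine ⟨hu₁, ?_⟩
  simpa [hu₁, hβ] using hfst

theorem snd_eq_reduced (h : LaxEquation α β 0 x₂ 0 y₂ 0 u₂ 0 v₂) (hα : α ≠ 0) (hβ : β ≠ 0)
    (hx : x₂ ≠ 0) (hv : v₂ ≠ 0) (hs : β * v₂ + α * u₂ ≠ 0) :
    u₂ = y₂ * (α * x₂ + β * y₂) / (β * x₂ + α * y₂) ∧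
      v₂ = x₂ * (α * x₂ + β * y₂) / (β * x₂ + α * y₂) := by
  have hsnd := h.linear_term_zero_one hα hβ
  have hratio : u₂ * x₂ = y₂ * v₂ := by
    have h₀ := h.constant_term_zero_zero
    field_simp at h₀
    linear_combination h₀
  have hden : v₂ * (β * x₂ + α * y₂) = x₂ * (α * x₂ + β * y₂) := by
    linear_combination x₂ * hsnd - α * hratio
  have hden₀ : β * x₂ + α * y₂ ≠ 0 := by
    intro h0
    rw [h0, mul_zero, eq_comm, ← hsnd] at hden
    exact mul_ne_zero hx hs hden
  constructor <;> rw [eq_div_iff hden₀]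
  · linear_combination y₂ * hsnd + β * hratio
  · linear_combination hden

end LaxEquation

theorem invariant_manifold_reduction_general (α β x₂ y₂ u₁ u₂ v₁ v₂ : ℝ)
    (hα : 0 < α) (hβ : 0 < β) (hx₂ : 0 < x₂)
    (hu₂ : 0 < u₂) (hv₂ : 0 < v₂)
    (h : ∀ ζ : ℝ, LaxT u₁ u₂ α ζ * LaxT v₁ v₂ β ζ = LaxT 0 y₂ β ζ * LaxT 0 x₂ α ζ) :
    u₁ = 0 ∧ v₁ = 0 ∧
    u₂ = y₂ * (α * x₂ + β * y₂) / (β * x₂ + α * y₂) ∧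
    v₂ = x₂ * (α * x₂ + β * y₂) / (β * x₂ + α * y₂) := by
  have hs : β * v₂ + α * u₂ ≠ 0 := by positivity
  obtain ⟨rfl, rfl⟩ := LaxEquation.fst_eq_zero h hα.ne' hβ.ne' hs
  exact ⟨rfl, rfl, LaxEquation.snd_eq_reduced h hα.ne' hβ.ne' hx₂.ne' hv₂.ne' hs⟩

/-- The manifold `{(0,x,0,y) : x,y > 0}` is invariant under the four-dimensional
Yang–Baxter map `R̃_{α,β}` defined by the Lax equation for `L̃`, and on it the map
reduces to `R_{α,β}(x₂,y₂) = (y₂(αx₂+βy₂)/(βx₂+αy₂), x₂(αx₂+βy₂)/(βx₂+αy₂))`: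
if `x₁ = y₁ = 0`, then the image satisfies `u₁ = v₁ = 0` and
`(u₂,v₂) = R_{α,β}(x₂,y₂)`. -/
theorem invariant_manifold_reduction (α β x₂ y₂ u₁ u₂ v₁ v₂ : ℝ)
    (hα : 0 < α) (hβ : 0 < β) (hx₂ : 0 < x₂) (hy₂ : 0 < y₂)
    (hu₂ : 0 < u₂) (hv₂ : 0 < v₂)
    (h : ∀ ζ : ℝ, LaxT u₁ u₂ α ζ * LaxT v₁ v₂ β ζ = LaxT 0 y₂ β ζ * LaxT 0 x₂ α ζ) :
    u₁ = 0 ∧ v₁ = 0 ∧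
    u₂ = y₂ * (α * x₂ + β * y₂) / (β * x₂ + α * y₂) ∧
    v₂ = x₂ * (α * x₂ + β * y₂) / (β * x₂ + α * y₂) :=
  invariant_manifold_reduction_general α β x₂ y₂ u₁ u₂ v₁ v₂ hα hβ hx₂ hu₂ hv₂ h
end
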